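/- Let {(x_i, g_i, f_i)}_{i∈I} be a finite family in E × E × ℝ, and let L > 0, M > 0. There exists a proper closed convex function f : E → ℝ ∪ {+∞} interpolating the data (f(x_i) = f_i, g_i ∈ ∂f(x_i)) that is L-smooth and whose all subgradients g (at any point) satisfy ‖g‖ ≤ M, if and only if for all i, j ∈ I: f_i − f_j − ⟨g_j, x_i − x_j⟩ ≥ (1/(2L))‖g_i − g_j‖² and ‖g_j‖ ≤ M. -/

import Mathlib

variable {E : Type*} [NormedAddCommGroup E] [InnerProductSpace ℝ E] [FiniteDimensional ℝ E]

/-- `f` is a proper, closed (lower semicontinuous) convex extended-real-valued function. -/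
def IsProperClosedConvex (f : E → EReal) : Prop :=
  (∃ x, f x ≠ ⊤) ∧ (∀ x, f x ≠ ⊥) ∧ LowerSemicontinuous f ∧
    ∀ x y : E, ∀ t : ℝ, 0 ≤ t → t ≤ 1 →
      f (t • x + (1 - t) • y) ≤ (t : EReal) * f x + ((1 - t : ℝ) : EReal) * f y

/-- `g` is a subgradient of `f` at `x`. -/
def IsSubgradientAt (f : E → EReal) (x g : E) : Prop :=
  ∀ y, f x + ((inner ℝ g (y - x) : ℝ) : EReal) ≤ f y

/-!
Necessity. Minimising `F + (r/2)‖· - y‖²` yields a point `p` at which `r (y - p)` is a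
subgradient; since subgradients have norm at most `M`, `p → y` as `r → ∞`, and as the graph of
`∂F` is closed, `F` has a subgradient everywhere and is thus finite. Refining a quadratic upper
bound `F z ≤ F x + ⟪g, z - x⟫ + C‖z - x‖²` through the midpoint of `[x, z]` improves `C` to
`C/2 + L/4`, which yields the descent lemma with constant `L/2`; evaluated at
`z = xᵢ - (gᵢ - gⱼ)/L` against the subgradient inequality at `xⱼ` it gives the condition.

Sufficiency. The condition says exactly that `h(y) = maxᵢ (⟪xᵢ, y⟫ - fᵢ + ‖y - gᵢ‖²/(2L))`
takes the value `⟪xⱼ, gⱼ⟫ - fⱼ` at `gⱼ`. The conjugate of `h` restricted to the ball of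
radius `M` is finite, convex and `M`-Lipschitz, interpolates the data, and the
`L⁻¹`-strong convexity of `h` makes it `L`-smooth.
-/

open RealInnerProductSpace Set Filter Topology

lemma nonpos_of_forall_mul_le_sq_mul {a b : ℝ}
    (h : ∀ t : ℝ, 0 < t → t < 1 → t * a ≤ t ^ 2 * b) : a ≤ 0 := by
  have hlim : Tendsto (fun t : ℝ => t * b) (𝓝[>] 0) (𝓝 0) :=
    ((continuous_mul_const b).tendsto' 0 0 (zero_mul b)).mono_left nhdsWithin_le_nhds
  refine ge_of_tendsto hlim ?_
  filter_upwards [Ioo_mem_nhdsGT one_pos] with t ⟨ht0, ht1⟩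
  have := h t ht0 ht1
  rw [sq, mul_assoc] at this
  exact le_of_mul_le_mul_left this ht0

section InnerProductSpace

variable {V : Type*} [NormedAddCommGroup V] [InnerProductSpace ℝ V]

def HasLipschitzSubgradients (F : V → EReal) (L : ℝ) : Prop :=
  ∀ x₁ x₂ g₁ g₂, IsSubgradientAt F x₁ g₁ → IsSubgradientAt F x₂ g₂ → ‖g₁ - g₂‖ ≤ L * ‖x₁ - x₂‖

lemma isSubgradientAt_coe_iff {φ : V → ℝ} {x g : V} :
    IsSubgradientAt (fun y => (φ y : EReal)) x g ↔ ∀ y, φ x + ⟪g, y - x⟫ ≤ φ y := by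
  simp only [IsSubgradientAt, ← EReal.coe_add, EReal.coe_le_coe_iff]

lemma IsSubgradientAt.ne_top {F : V → EReal} {x g y : V} (hg : IsSubgradientAt F x g)
    (hy : F y ≠ ⊤) : F x ≠ ⊤ := by
  intro hx
  have := hg y
  rw [hx, EReal.top_add_coe, top_le_iff] at this
  exact hy this

lemma isClosed_setOf_isSubgradientAt {F : V → EReal} (hF : LowerSemicontinuous F) :
    IsClosed {p : V × V | IsSubgradientAt F p.1 p.2} := by
  simp only [IsSubgradientAt, ofPred_forall]
  refine isClosed_iInter fun y => ?_
  have : LowerSemicontinuous fun p : V × V => F p.1 + ((⟪p.2, y - p.1⟫ : ℝ) : EReal) :=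
    (hF.comp continuous_fst).add'
      (continuous_coe_real_ereal.comp (by fun_prop)).lowerSemicontinuous
      fun _ => EReal.continuousAt_add (Or.inr (EReal.coe_ne_bot _)) (Or.inr (EReal.coe_ne_top _))
  exact this.isClosed_preimage (F y)

lemma isProperClosedConvex_coe {φ : V → ℝ} (hc : Continuous φ) (hφ : ConvexOn ℝ univ φ) :
    IsProperClosedConvex fun y => (φ y : EReal) := by
  refine ⟨⟨0, EReal.coe_ne_top _⟩, fun _ => EReal.coe_ne_bot _,
    (continuous_coe_real_ereal.comp hc).lowerSemicontinuous, fun x y t ht0 ht1 => ?_⟩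
  rw [← EReal.coe_mul, ← EReal.coe_mul, ← EReal.coe_add, EReal.coe_le_coe_iff]
  exact hφ.2 (mem_univ x) (mem_univ y) ht0 (by linarith) (by ring)

lemma IsProperClosedConvex.isSubgradientAt_of_forall_add_sq_le {F : V → EReal}
    (hF : IsProperClosedConvex F) {y p : V} {r : ℝ} (hp : F p ≠ ⊤)
    (hmin : ∀ w, F p + ((r / 2 * ‖p - y‖ ^ 2 : ℝ) : EReal) ≤
      F w + ((r / 2 * ‖w - y‖ ^ 2 : ℝ) : EReal)) :
    IsSubgradientAt F p (r • (y - p)) := by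
  obtain ⟨a, ha⟩ : ∃ a : ℝ, F p = a := ⟨_, (EReal.coe_toReal hp (hF.2.1 p)).symm⟩
  intro w
  by_cases hw : F w = ⊤
  · simp [hw]
  obtain ⟨b, hb⟩ : ∃ b : ℝ, F w = b := ⟨_, (EReal.coe_toReal hw (hF.2.1 w)).symm⟩
  rw [ha, hb, ← EReal.coe_add, EReal.coe_le_coe_iff, real_inner_smul_left]
  suffices a + r * ⟪y - p, w - p⟫ - b ≤ 0 by linarith
  refine nonpos_of_forall_mul_le_sq_mul (b := r / 2 * ‖w - p‖ ^ 2) fun t ht0 ht1 => ?_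
  have hconv := hF.2.2.2 w p t ht0.le ht1.le
  rw [ha, hb, ← EReal.coe_mul, ← EReal.coe_mul, ← EReal.coe_add] at hconv
  have hcomb : ((a + r / 2 * ‖p - y‖ ^ 2 : ℝ) : EReal) ≤
      ((t * b + (1 - t) * a + r / 2 * ‖t • w + (1 - t) • p - y‖ ^ 2 : ℝ) : EReal) := by
    calc ((a + r / 2 * ‖p - y‖ ^ 2 : ℝ) : EReal)
        = F p + ((r / 2 * ‖p - y‖ ^ 2 : ℝ) : EReal) := by rw [ha, EReal.coe_add]
      _ ≤ F (t • w + (1 - t) • p) + ((r / 2 * ‖t • w + (1 - t) • p - y‖ ^ 2 : ℝ) : EReal) :=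
          hmin _
      _ ≤ _ := by rw [EReal.coe_add]; gcongr
  have hsplit : t • w + (1 - t) • p - y = (p - y) + t • (w - p) := by module
  rw [EReal.coe_le_coe_iff, hsplit, norm_add_sq_real, real_inner_smul_right, norm_smul,
    Real.norm_eq_abs, mul_pow, sq_abs] at hcomb
  rw [← neg_sub p y, inner_neg_left]
  nlinarith

lemma norm_le_of_isSubgradientAt_of_le_add {φ : V → ℝ} {M : ℝ} (hM : 0 ≤ M)
    (hφ : ∀ z₁ z₂, φ z₁ ≤ φ z₂ + M * ‖z₁ - z₂‖) {z u : V}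
    (hu : IsSubgradientAt (fun y => (φ y : EReal)) z u) : ‖u‖ ≤ M := by
  have h₁ := isSubgradientAt_coe_iff.1 hu (z + u)
  have h₂ := hφ (z + u) z
  rw [add_sub_cancel_left, real_inner_self_eq_norm_sq] at h₁
  rw [add_sub_cancel_left] at h₂
  nlinarith [norm_nonneg u]

end InnerProductSpace

section Descent

variable {V : Type*} [NormedAddCommGroup V] [InnerProductSpace ℝ V] {φ : V → ℝ} {L : ℝ}

lemma le_add_inner_add_mul_sq_of_hasLipschitzSubgradients
    (hsmooth : HasLipschitzSubgradients (fun y => (φ y : EReal)) L)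
    {x g z v : V} (hg : IsSubgradientAt (fun y => (φ y : EReal)) x g)
    (hv : IsSubgradientAt (fun y => (φ y : EReal)) z v) :
    φ z ≤ φ x + ⟪g, z - x⟫ + L * ‖z - x‖ ^ 2 := by
  have hzx := isSubgradientAt_coe_iff.1 hv x
  have hcs := real_inner_le_norm (v - g) (z - x)
  have hlip := mul_le_mul_of_nonneg_right (hsmooth z x v g hv hg) (norm_nonneg (z - x))
  rw [inner_sub_left] at hcs
  rw [← neg_sub z x, inner_neg_right] at hzx
  nlinarith

lemma le_add_inner_add_mul_sq_refine
    (hsub : ∀ x, ∃ g, IsSubgradientAt (fun y => (φ y : EReal)) x g)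
    (hsmooth : HasLipschitzSubgradients (fun y => (φ y : EReal)) L)
    {C : ℝ} (hC : ∀ x g z, IsSubgradientAt (fun y => (φ y : EReal)) x g →
      φ z ≤ φ x + ⟪g, z - x⟫ + C * ‖z - x‖ ^ 2)
    {x g : V} (hg : IsSubgradientAt (fun y => (φ y : EReal)) x g) (z : V) :
    φ z ≤ φ x + ⟪g, z - x⟫ + (C / 2 + L / 4) * ‖z - x‖ ^ 2 := by
  set d := (1 / 2 : ℝ) • (z - x)
  obtain ⟨v, hv⟩ := hsub (x + d)
  have hfirst := hC x g (x + d) hg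
  have hsecond := hC (x + d) v z hv
  have hzd : z - (x + d) = d := by simp only [d]; module
  have hd : z - x = (2 : ℝ) • d := by simp only [d]; module
  rw [add_sub_cancel_left] at hfirst
  rw [hzd] at hsecond
  have hcs := real_inner_le_norm (v - g) d
  have hlip := mul_le_mul_of_nonneg_right (hsmooth (x + d) x v g hv hg) (norm_nonneg d)
  rw [add_sub_cancel_left] at hlip
  rw [inner_sub_left] at hcs
  rw [hd, norm_smul, inner_smul_right, Real.norm_two]
  nlinarith

theorem le_add_inner_add_half_sq_of_hasLipschitzSubgradients
    (hsub : ∀ x, ∃ g, IsSubgradientAt (fun y => (φ y : EReal)) x g)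
    (hsmooth : HasLipschitzSubgradients (fun y => (φ y : EReal)) L)
    {x g : V} (hg : IsSubgradientAt (fun y => (φ y : EReal)) x g) (z : V) :
    φ z ≤ φ x + ⟪g, z - x⟫ + L / 2 * ‖z - x‖ ^ 2 := by
  -- `L / 2 + L / 2 * (1 / 2) ^ k` is the `k`-th iterate of `C ↦ C / 2 + L / 4` from `C = L`
  have hk : ∀ k : ℕ, ∀ x g z, IsSubgradientAt (fun y => (φ y : EReal)) x g →
      φ z ≤ φ x + ⟪g, z - x⟫ + (L / 2 + L / 2 * (1 / 2) ^ k) * ‖z - x‖ ^ 2 := by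
    intro k
    induction k with
    | zero =>
      intro x g z hg
      obtain ⟨v, hv⟩ := hsub z
      simpa using le_add_inner_add_mul_sq_of_hasLipschitzSubgradients hsmooth hg hv
    | succ k ih =>
      intro x g z hg
      convert le_add_inner_add_mul_sq_refine hsub hsmooth ih hg z using 3
      ring
  have hlim : Tendsto
      (fun k : ℕ => φ x + ⟪g, z - x⟫ + (L / 2 + L / 2 * (1 / 2) ^ k) * ‖z - x‖ ^ 2)
      atTop (𝓝 (φ x + ⟪g, z - x⟫ + (L / 2 + L / 2 * 0) * ‖z - x‖ ^ 2)) := by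
    have := tendsto_pow_atTop_nhds_zero_of_lt_one (by norm_num : (0 : ℝ) ≤ 1 / 2) (by norm_num)
    exact ((this.const_mul (L / 2)).const_add (L / 2)).mul_const _ |>.const_add _
  rw [mul_zero, add_zero] at hlim
  exact ge_of_tendsto' hlim fun k => hk k x g z hg

lemma interpolation_inequality_of_descent (hL : 0 < L) {xi xj gi gj : V}
    (hdesc : ∀ z, φ z ≤ φ xi + ⟪gi, z - xi⟫ + L / 2 * ‖z - xi‖ ^ 2)
    (hj : IsSubgradientAt (fun y => (φ y : EReal)) xj gj) :
    1 / (2 * L) * ‖gi - gj‖ ^ 2 ≤ φ xi - φ xj - ⟪gj, xi - xj⟫ := by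
  set z := xi - L⁻¹ • (gi - gj)
  have hupper := hdesc z
  have hlower := isSubgradientAt_coe_iff.1 hj z
  have hzi : z - xi = -(L⁻¹ • (gi - gj)) := by simp only [z]; abel
  have hzj : z - xj = (xi - xj) - L⁻¹ • (gi - gj) := by simp only [z]; abel
  have hgap : ⟪gi, gi - gj⟫ - ⟪gj, gi - gj⟫ = ‖gi - gj‖ ^ 2 := by
    rw [← inner_sub_left, real_inner_self_eq_norm_sq]
  rw [hzi, norm_neg, norm_smul, inner_neg_right, real_inner_smul_right, Real.norm_eq_abs,
    abs_of_pos (inv_pos.2 hL)] at hupper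
  rw [hzj, inner_sub_right, real_inner_smul_right] at hlower
  have hLL : L / 2 * (L⁻¹ * ‖gi - gj‖) ^ 2 = L⁻¹ / 2 * ‖gi - gj‖ ^ 2 := by
    field_simp
  rw [one_div, mul_inv, mul_comm 2⁻¹ L⁻¹]
  linear_combination hupper + hlower - L⁻¹ * hgap + hLL

end Descent

section Necessity

variable {F : E → EReal}

lemma exists_forall_add_sq_le (hF : LowerSemicontinuous F) {x₀ g₀ : E} {a : ℝ}
    (ha : F x₀ = a) (hg₀ : IsSubgradientAt F x₀ g₀) (y : E) {r : ℝ} (hr : 0 < r) :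
    ∃ p, F p ≠ ⊤ ∧ ∀ w,
      F p + ((r / 2 * ‖p - y‖ ^ 2 : ℝ) : EReal) ≤ F w + ((r / 2 * ‖w - y‖ ^ 2 : ℝ) : EReal) := by
  set G : E → EReal := fun w => F w + ((r / 2 * ‖w - y‖ ^ 2 : ℝ) : EReal)
  have hG : LowerSemicontinuous G :=
    hF.add' (continuous_coe_real_ereal.comp (by fun_prop)).lowerSemicontinuous
      fun _ => EReal.continuousAt_add (Or.inr (EReal.coe_ne_bot _)) (Or.inr (EReal.coe_ne_top _))
  -- `G` lies above a quadratic whose sublevel sets are balls centred at `c`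
  set c := y - r⁻¹ • g₀
  set K := a + ⟪g₀, y - x₀⟫ - ‖g₀‖ ^ 2 / (2 * r)
  have hquad : ∀ w, a + ⟪g₀, w - x₀⟫ + r / 2 * ‖w - y‖ ^ 2 = r / 2 * ‖w - c‖ ^ 2 + K := by
    intro w
    have : w - c = (w - y) + r⁻¹ • g₀ := by simp only [c]; abel
    rw [← sub_add_sub_cancel w y x₀, inner_add_right, this, norm_add_sq_real, norm_smul,
      real_inner_smul_right, real_inner_comm (w - y) g₀, Real.norm_eq_abs,
      abs_of_pos (inv_pos.2 hr)]
    simp only [K]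
    field_simp
    ring
  have hlow : ∀ w, ((r / 2 * ‖w - c‖ ^ 2 + K : ℝ) : EReal) ≤ G w := by
    intro w
    rw [← hquad, EReal.coe_add, EReal.coe_add, ← ha]
    exact add_le_add_left (hg₀ w) _
  have hx₀ : x₀ ∈ Metric.closedBall c ‖x₀ - c‖ := by rw [Metric.mem_closedBall, dist_eq_norm]
  obtain ⟨p, -, hp⟩ := (hG.lowerSemicontinuousOn _).exists_isMinOn ⟨x₀, hx₀⟩
    (isCompact_closedBall c ‖x₀ - c‖)
  have hpw : ∀ w, G p ≤ G w := by
    intro w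
    by_cases hw : w ∈ Metric.closedBall c ‖x₀ - c‖
    · exact hp hw
    rw [Metric.mem_closedBall, dist_eq_norm, not_le] at hw
    calc G p ≤ G x₀ := hp hx₀
      _ = ((r / 2 * ‖x₀ - c‖ ^ 2 + K : ℝ) : EReal) := by
          rw [← hquad, sub_self, inner_zero_right, add_zero, EReal.coe_add, ← ha]
      _ ≤ _ := EReal.coe_le_coe_iff.2 (by gcongr)
      _ ≤ G w := hlow w
  refine ⟨p, fun htop => ?_, hpw⟩
  have := hpw x₀
  simp only [G, htop, EReal.top_add_coe, top_le_iff, ha, ← EReal.coe_add] at this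
  exact EReal.coe_ne_top _ this

theorem IsProperClosedConvex.exists_isSubgradientAt (hF : IsProperClosedConvex F)
    {x₀ g₀ : E} {a : ℝ} (ha : F x₀ = a) (hg₀ : IsSubgradientAt F x₀ g₀) {M : ℝ}
    (hbound : ∀ z u, IsSubgradientAt F z u → ‖u‖ ≤ M) (y : E) :
    ∃ u, IsSubgradientAt F y u := by
  have hprox : ∀ n : ℕ, ∃ p, IsSubgradientAt F p (((n : ℝ) + 1) • (y - p)) := fun n => by
    obtain ⟨p, hp, hmin⟩ := exists_forall_add_sq_le hF.2.2.1 ha hg₀ y n.cast_add_one_pos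
    exact ⟨p, hF.isSubgradientAt_of_forall_add_sq_le hp hmin⟩
  choose p hp using hprox
  have hu : ∀ n : ℕ, ((n : ℝ) + 1) • (y - p n) ∈ Metric.closedBall (0 : E) M :=
    fun n => mem_closedBall_zero_iff.2 (hbound _ _ (hp n))
  obtain ⟨u, -, σ, hσ, hu_lim⟩ := (isCompact_closedBall (0 : E) M).tendsto_subseq hu
  have hp_lim : Tendsto p atTop (𝓝 y) := by
    rw [tendsto_iff_norm_sub_tendsto_zero]
    refine squeeze_zero (fun _ => norm_nonneg _) (fun n => ?_)
      (by simpa using tendsto_one_div_add_atTop_nhds_zero_nat.const_mul M)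
    have := mem_closedBall_zero_iff.1 (hu n)
    rw [norm_smul, Real.norm_eq_abs, abs_of_pos n.cast_add_one_pos, norm_sub_rev] at this
    rw [← div_eq_mul_inv, le_div_iff₀ n.cast_add_one_pos]
    linarith
  exact ⟨u, (isClosed_setOf_isSubgradientAt hF.2.2.1).mem_of_tendsto
    ((hp_lim.comp hσ.tendsto_atTop).prodMk_nhds hu_lim) (Eventually.of_forall fun n => hp (σ n))⟩

theorem IsProperClosedConvex.interpolation_inequality (hF : IsProperClosedConvex F) {L M : ℝ}
    (hL : 0 < L) (hsmooth : HasLipschitzSubgradients F L)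
    (hbound : ∀ z u, IsSubgradientAt F z u → ‖u‖ ≤ M)
    {xi xj gi gj : E} {fi fj : ℝ} (hi : F xi = fi) (hgi : IsSubgradientAt F xi gi)
    (hj : F xj = fj) (hgj : IsSubgradientAt F xj gj) :
    1 / (2 * L) * ‖gi - gj‖ ^ 2 ≤ fi - fj - ⟪gj, xi - xj⟫ := by
  have hsub := hF.exists_isSubgradientAt hj hgj hbound
  obtain ⟨φ, rfl⟩ : ∃ φ : E → ℝ, F = fun y => (φ y : EReal) := by
    refine ⟨fun y => (F y).toReal, funext fun y => (EReal.coe_toReal ?_ (hF.2.1 y)).symm⟩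
    obtain ⟨u, hu⟩ := hsub y
    exact hu.ne_top (y := xj) (by rw [hj]; exact EReal.coe_ne_top fj)
  simp only [EReal.coe_eq_coe_iff] at hi hj
  subst hi hj
  exact interpolation_inequality_of_descent hL
    (le_add_inner_add_half_sq_of_hasLipschitzSubgradients hsub hsmooth hgi) hgj

end Necessity

section StrongConvexity

variable {V : Type*} [NormedAddCommGroup V] [InnerProductSpace ℝ V] {s : Set V}

lemma UniformConvexOn.finset_sup' {ι : Type*} {ψ : ℝ → ℝ} {t : Finset ι} (ht : t.Nonempty)
    {f : ι → V → ℝ} (hf : ∀ i ∈ t, UniformConvexOn s ψ (f i)) :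
    UniformConvexOn s ψ fun x => t.sup' ht fun i => f i x := by
  obtain ⟨i₀, hi₀⟩ := ht
  refine ⟨(hf i₀ hi₀).1, fun x hx y hy a b ha hb hab => Finset.sup'_le _ _ fun i hi => ?_⟩
  have hxy := (hf i hi).2 hx hy ha hb hab
  have hx' := mul_le_mul_of_nonneg_left (Finset.le_sup' (fun i => f i x) hi) ha
  have hy' := mul_le_mul_of_nonneg_left (Finset.le_sup' (fun i => f i y) hi) hb
  simp only [smul_eq_mul] at hxy ⊢
  linarith

lemma strongConvexOn_inner_sub_add_sq (hs : Convex ℝ s) (a b : V) (c μ : ℝ) :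
    StrongConvexOn s μ fun y => ⟪a, y⟫ - c + μ / 2 * ‖y - b‖ ^ 2 := by
  rw [strongConvexOn_iff_convex]
  have : (fun y => ⟪a, y⟫ - c + μ / 2 * ‖y - b‖ ^ 2 - μ / 2 * ‖y‖ ^ 2) =
      (fun y => ⟪a - μ • b, y⟫) + fun _ => μ / 2 * ‖b‖ ^ 2 - c := by
    ext y
    simp only [Pi.add_apply]
    rw [norm_sub_sq_real, inner_sub_left, real_inner_smul_left, real_inner_comm b y]
    ring
  rw [this]
  exact ((innerₛₗ ℝ (a - μ • b)).convexOn hs).add_const _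

lemma StrongConvexOn.add_inner_add_sq_le {μ : ℝ} {h : V → ℝ} (hh : StrongConvexOn s μ h)
    {u z w : V} (hu : u ∈ s) (hmin : ∀ w ∈ s, h u + ⟪z, w - u⟫ ≤ h w) (hw : w ∈ s) :
    h u + ⟪z, w - u⟫ + μ / 2 * ‖w - u‖ ^ 2 ≤ h w := by
  suffices h u + ⟪z, w - u⟫ + μ / 2 * ‖w - u‖ ^ 2 - h w ≤ 0 by linarith
  refine nonpos_of_forall_mul_le_sq_mul (b := μ / 2 * ‖w - u‖ ^ 2) fun t ht0 ht1 => ?_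
  have hconv := hh.2 hw hu ht0.le (sub_nonneg.2 ht1.le) (add_sub_cancel t 1)
  have hstep := hmin _ (hh.1 hw hu ht0.le (sub_nonneg.2 ht1.le) (add_sub_cancel t 1))
  have hseg : t • w + (1 - t) • u - u = t • (w - u) := by module
  rw [hseg, real_inner_smul_right] at hstep
  simp only [smul_eq_mul] at hconv
  nlinarith

lemma mul_norm_sub_le_of_add_inner_add_sq_le {μ : ℝ} {h : V → ℝ} {u₁ u₂ z₁ z₂ : V}
    (hu₁ : u₁ ∈ s) (hu₂ : u₂ ∈ s)
    (h₁ : ∀ w ∈ s, h u₁ + ⟪z₁, w - u₁⟫ + μ / 2 * ‖w - u₁‖ ^ 2 ≤ h w)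
    (h₂ : ∀ w ∈ s, h u₂ + ⟪z₂, w - u₂⟫ + μ / 2 * ‖w - u₂‖ ^ 2 ≤ h w) :
    μ * ‖u₁ - u₂‖ ≤ ‖z₁ - z₂‖ := by
  have e₁ := h₁ u₂ hu₂
  have e₂ := h₂ u₁ hu₁
  rw [norm_sub_rev] at e₁
  have hcocoercive : μ * ‖u₁ - u₂‖ ^ 2 ≤ ‖z₁ - z₂‖ * ‖u₁ - u₂‖ := by
    have hcs := real_inner_le_norm (z₁ - z₂) (u₁ - u₂)
    rw [← neg_sub u₁ u₂, inner_neg_right] at e₁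
    rw [inner_sub_left] at hcs
    linarith
  rcases (norm_nonneg (u₁ - u₂)).eq_or_lt with h0 | h0
  · rw [← h0, mul_zero]; exact norm_nonneg _
  · rw [sq, ← mul_assoc] at hcocoercive
    exact le_of_mul_le_mul_right hcocoercive h0

end StrongConvexity

section Conjugate

variable {V : Type*} [NormedAddCommGroup V] [InnerProductSpace ℝ V] {h : V → ℝ} {s : Set V}

/-- The convex conjugate of `h + ι_s`, where `ι_s` is the indicator function of `s`. -/
noncomputable def conjugateOn (h : V → ℝ) (s : Set V) (z : V) : ℝ :=
  sSup ((fun y => ⟪z, y⟫ - h y) '' s)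

lemma le_conjugateOn (hs : IsCompact s) (hh : ContinuousOn h s) (z : V) {y : V} (hy : y ∈ s) :
    ⟪z, y⟫ - h y ≤ conjugateOn h s z :=
  le_csSup (hs.bddAbove_image ((continuousOn_const.inner continuousOn_id).sub hh))
    (mem_image_of_mem _ hy)

lemma exists_conjugateOn_eq (hs : IsCompact s) (hne : s.Nonempty) (hh : ContinuousOn h s)
    (z : V) : ∃ y ∈ s, conjugateOn h s z = ⟪z, y⟫ - h y := by
  obtain ⟨y, hy, hmax⟩ :=
    hs.exists_isMaxOn hne ((continuousOn_const.inner continuousOn_id).sub hh)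
  exact ⟨y, hy, IsGreatest.csSup_eq ⟨mem_image_of_mem _ hy, forall_mem_image.2 fun _ hw => hmax hw⟩⟩

lemma conjugateOn_le_add (hs : IsCompact s) (hne : s.Nonempty) (hh : ContinuousOn h s) {M : ℝ}
    (hsM : s ⊆ Metric.closedBall 0 M) (z₁ z₂ : V) :
    conjugateOn h s z₁ ≤ conjugateOn h s z₂ + M * ‖z₁ - z₂‖ := by
  obtain ⟨y, hy, hyz⟩ := exists_conjugateOn_eq hs hne hh z₁
  have hle := le_conjugateOn hs hh z₂ hy
  have hcs := real_inner_le_norm (z₁ - z₂) y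
  have hyM :=
    mul_le_mul_of_nonneg_left (mem_closedBall_zero_iff.1 (hsM hy)) (norm_nonneg (z₁ - z₂))
  rw [inner_sub_left] at hcs
  linarith

lemma convexOn_conjugateOn (hs : IsCompact s) (hne : s.Nonempty) (hh : ContinuousOn h s) :
    ConvexOn ℝ univ (conjugateOn h s) := by
  refine ⟨convex_univ, fun z₁ _ z₂ _ a b ha hb hab => ?_⟩
  obtain ⟨y, hy, hyz⟩ := exists_conjugateOn_eq hs hne hh (a • z₁ + b • z₂)
  have h₁ := mul_le_mul_of_nonneg_left (le_conjugateOn hs hh z₁ hy) ha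
  have h₂ := mul_le_mul_of_nonneg_left (le_conjugateOn hs hh z₂ hy) hb
  rw [hyz, inner_add_left, real_inner_smul_left, real_inner_smul_left, smul_eq_mul, smul_eq_mul]
  linear_combination h₁ + h₂ + h y * hab

lemma conjugateOn_eq_of_isSubgradientAt (hs : IsCompact s) (hh : ContinuousOn h s) {z u d : V}
    (hu : u ∈ s) (hd : ∀ y ∈ s, h u + ⟪d, y - u⟫ ≤ h y)
    (hzu : IsSubgradientAt (fun w => (conjugateOn h s w : EReal)) z u) :
    conjugateOn h s z = ⟪z, u⟫ - h u := by
  have hdu : conjugateOn h s d ≤ ⟪d, u⟫ - h u := by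
    refine csSup_le ⟨_, mem_image_of_mem _ hu⟩ (forall_mem_image.2 fun y hy => ?_)
    have := hd y hy
    rw [inner_sub_right] at this
    linarith
  have hsub := isSubgradientAt_coe_iff.1 hzu d
  rw [inner_sub_right, real_inner_comm d u, real_inner_comm z u] at hsub
  exact le_antisymm (by linarith) (le_conjugateOn hs hh z hu)

lemma StrongConvexOn.add_inner_add_sq_le_of_isSubgradientAt_conjugateOn (hs : IsCompact s)
    (hh : ContinuousOn h s) {μ : ℝ} (hconv : StrongConvexOn s μ h)
    (hd : ∀ u ∈ s, ∃ d, ∀ y ∈ s, h u + ⟪d, y - u⟫ ≤ h y) {z u : V} (hu : u ∈ s)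
    (hzu : IsSubgradientAt (fun w => (conjugateOn h s w : EReal)) z u) :
    ∀ w ∈ s, h u + ⟪z, w - u⟫ + μ / 2 * ‖w - u‖ ^ 2 ≤ h w := by
  obtain ⟨d, hd⟩ := hd u hu
  have heq := conjugateOn_eq_of_isSubgradientAt hs hh hu hd hzu
  refine fun w hw => hconv.add_inner_add_sq_le hu (fun w hw => ?_) hw
  have := le_conjugateOn hs hh z hw
  rw [heq] at this
  rw [inner_sub_right]
  linarith

end Conjugate

section DualInterpolant

variable {V : Type*} [NormedAddCommGroup V] [InnerProductSpace ℝ V]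
  {ι : Type*} [Fintype ι] [Nonempty ι] {L : ℝ} {x g : ι → V} {f : ι → ℝ}

/-- The `L⁻¹`-strongly convex interpolant of the conjugate data `(g i, x i, ⟪g i, x i⟫ - f i)`. -/
noncomputable def dualInterpolant (L : ℝ) (x g : ι → V) (f : ι → ℝ) (y : V) : ℝ :=
  Finset.univ.sup' Finset.univ_nonempty fun i => ⟪x i, y⟫ - f i + L⁻¹ / 2 * ‖y - g i‖ ^ 2

lemma le_dualInterpolant (i : ι) (y : V) :
    ⟪x i, y⟫ - f i + L⁻¹ / 2 * ‖y - g i‖ ^ 2 ≤ dualInterpolant L x g f y :=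
  Finset.le_sup' (fun i => ⟪x i, y⟫ - f i + L⁻¹ / 2 * ‖y - g i‖ ^ 2) (Finset.mem_univ i)

lemma continuous_dualInterpolant : Continuous (dualInterpolant L x g f) :=
  Continuous.finset_sup'_apply _ fun _ _ => by fun_prop

lemma strongConvexOn_dualInterpolant {s : Set V} (hs : Convex ℝ s) :
    StrongConvexOn s L⁻¹ (dualInterpolant L x g f) :=
  UniformConvexOn.finset_sup' _ fun i _ =>
    strongConvexOn_inner_sub_add_sq hs (x i) (g i) (f i) L⁻¹

lemma exists_add_inner_le_dualInterpolant (hL : 0 < L) (u : V) :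
    ∃ d, ∀ y, dualInterpolant L x g f u + ⟪d, y - u⟫ ≤ dualInterpolant L x g f y := by
  obtain ⟨i, -, hi⟩ := Finset.exists_mem_eq_sup' Finset.univ_nonempty
    fun i => ⟪x i, u⟫ - f i + L⁻¹ / 2 * ‖u - g i‖ ^ 2
  refine ⟨x i + L⁻¹ • (u - g i), fun y => le_trans ?_ (le_dualInterpolant i y)⟩
  have hsplit : y - g i = (y - u) + (u - g i) := by abel
  have hsq : 0 ≤ L⁻¹ / 2 * ‖y - u‖ ^ 2 := by positivity
  rw [dualInterpolant, hi, hsplit, norm_add_sq_real, inner_add_left, real_inner_smul_left,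
    real_inner_comm (u - g i), inner_sub_right]
  nlinarith

lemma dualInterpolant_apply_of_interpolable
    (hcond : ∀ i j, 1 / (2 * L) * ‖g i - g j‖ ^ 2 ≤ f i - f j - ⟪g j, x i - x j⟫) (j : ι) :
    dualInterpolant L x g f (g j) = ⟪x j, g j⟫ - f j := by
  refine le_antisymm (Finset.sup'_le _ _ fun i _ => ?_) ?_
  · have := hcond i j
    rw [inner_sub_right, real_inner_comm (x i), real_inner_comm (x j), norm_sub_rev,
      show 1 / (2 * L) = L⁻¹ / 2 by ring] at this
    linarith
  · simpa using le_dualInterpolant (L := L) (x := x) (g := g) (f := f) j (g j)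

lemma conjugateOn_dualInterpolant_interpolates (hL : 0 < L) {s : Set V} (hs : IsCompact s)
    (hgs : ∀ i, g i ∈ s)
    (hcond : ∀ i j, 1 / (2 * L) * ‖g i - g j‖ ^ 2 ≤ f i - f j - ⟪g j, x i - x j⟫) (j : ι) :
    conjugateOn (dualInterpolant L x g f) s (x j) = f j ∧
      IsSubgradientAt (fun w => (conjugateOn (dualInterpolant L x g f) s w : EReal))
        (x j) (g j) := by
  have hh := (continuous_dualInterpolant (L := L) (x := x) (g := g) (f := f)).continuousOn
    (s := s)
  have hlow := fun w => le_conjugateOn hs hh w (hgs j)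
  rw [dualInterpolant_apply_of_interpolable hcond] at hlow
  have hval : conjugateOn (dualInterpolant L x g f) s (x j) = f j := by
    refine le_antisymm (csSup_le ⟨_, mem_image_of_mem _ (hgs j)⟩
      (forall_mem_image.2 fun y _ => ?_)) (by linarith [hlow (x j)])
    have := le_dualInterpolant (L := L) (x := x) (g := g) (f := f) j y
    have : 0 ≤ L⁻¹ / 2 * ‖y - g j‖ ^ 2 := by positivity
    linarith
  refine ⟨hval, isSubgradientAt_coe_iff.2 fun w => ?_⟩
  rw [hval, inner_sub_right, real_inner_comm (x j), real_inner_comm w]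
  linarith [hlow w]

end DualInterpolant

theorem exists_smooth_bounded_interpolant {ι : Type*} [Fintype ι] [Nonempty ι] {L M : ℝ}
    (hL : 0 < L) (x g : ι → E) (f : ι → ℝ)
    (hcond : ∀ i j, 1 / (2 * L) * ‖g i - g j‖ ^ 2 ≤ f i - f j - ⟪g j, x i - x j⟫ ∧ ‖g j‖ ≤ M) :
    ∃ F : E → EReal, IsProperClosedConvex F ∧ HasLipschitzSubgradients F L ∧
      (∀ z u, IsSubgradientAt F z u → ‖u‖ ≤ M) ∧
      ∀ i, F (x i) = f i ∧ IsSubgradientAt F (x i) (g i) := by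
  set h := dualInterpolant L x g f
  set B := Metric.closedBall (0 : E) M
  have hgB : ∀ i, g i ∈ B := fun i => mem_closedBall_zero_iff.2 (hcond i i).2
  have hB : IsCompact B := isCompact_closedBall 0 M
  have hBne : B.Nonempty := ⟨_, hgB (Classical.arbitrary ι)⟩
  have hh : ContinuousOn h B := continuous_dualInterpolant.continuousOn
  have hlip := conjugateOn_le_add hB hBne hh subset_rfl
  have hbound : ∀ z u, IsSubgradientAt (fun w => (conjugateOn h B w : EReal)) z u → ‖u‖ ≤ M :=
    fun z u => norm_le_of_isSubgradientAt_of_le_add (Metric.nonempty_closedBall.1 hBne) hlip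
  have hconv : StrongConvexOn B L⁻¹ h := strongConvexOn_dualInterpolant (convex_closedBall 0 M)
  have hd : ∀ u ∈ B, ∃ d, ∀ y ∈ B, h u + ⟪d, y - u⟫ ≤ h y := fun u _ =>
    (exists_add_inner_le_dualInterpolant hL u).imp fun _ hd y _ => hd y
  have hgrowth := fun z u (hzu : IsSubgradientAt (fun w => (conjugateOn h B w : EReal)) z u) =>
    hconv.add_inner_add_sq_le_of_isSubgradientAt_conjugateOn hB hh hd
      (mem_closedBall_zero_iff.2 (hbound z u hzu)) hzu
  refine ⟨fun w => (conjugateOn h B w : EReal),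
    isProperClosedConvex_coe (LipschitzWith.of_le_add_mul' M fun _ _ => by
      rw [dist_eq_norm]; exact hlip _ _).continuous (convexOn_conjugateOn hB hBne hh),
    fun z₁ z₂ u₁ u₂ h₁ h₂ => ?_, hbound, fun i => ?_⟩
  · have := mul_norm_sub_le_of_add_inner_add_sq_le (mem_closedBall_zero_iff.2 (hbound _ _ h₁))
      (mem_closedBall_zero_iff.2 (hbound _ _ h₂)) (hgrowth _ _ h₁) (hgrowth _ _ h₂)
    rwa [inv_mul_le_iff₀ hL] at this
  · obtain ⟨hval, hsub⟩ := conjugateOn_dualInterpolant_interpolates hL hB hgB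
      (fun i j => (hcond i j).1) i
    exact ⟨congrArg (fun r : ℝ => (r : EReal)) hval, hsub⟩

/-- Interpolation by an `L`-smooth convex function all of whose subgradients are
bounded in norm by `M` is possible iff the smoothness interpolation inequalities
and the gradient bounds hold on the data. -/
theorem stmt17 {ι : Type*} [Fintype ι] (L M : ℝ) (hL : 0 < L) (hM : 0 < M)
    (x g : ι → E) (f : ι → ℝ) :
    (∃ F : E → EReal, IsProperClosedConvex F ∧
        (∀ x₁ x₂ g₁ g₂, IsSubgradientAt F x₁ g₁ → IsSubgradientAt F x₂ g₂ →
          ‖g₁ - g₂‖ ≤ L * ‖x₁ - x₂‖) ∧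
        (∀ z h, IsSubgradientAt F z h → ‖h‖ ≤ M) ∧
        ∀ i, F (x i) = ((f i : ℝ) : EReal) ∧ IsSubgradientAt F (x i) (g i)) ↔
      ∀ i j, 1 / (2 * L) * ‖g i - g j‖ ^ 2 ≤
          f i - f j - (inner ℝ (g j) (x i - x j) : ℝ) ∧ ‖g j‖ ≤ M := by
  constructor
  · rintro ⟨F, hF, hsmooth, hbound, hinterp⟩ i j
    exact ⟨hF.interpolation_inequality hL hsmooth hbound (hinterp i).1 (hinterp i).2
      (hinterp j).1 (hinterp j).2, hbound _ _ (hinterp j).2⟩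
  · intro hcond
    cases isEmpty_or_nonempty ι
    · obtain ⟨F, hF, hsmooth, hbound, -⟩ := exists_smooth_bounded_interpolant (ι := Unit)
        (M := M) hL (fun _ => (0 : E)) (fun _ => 0) (fun _ => 0) fun _ _ => by simp [hM.le]
      exact ⟨F, hF, hsmooth, hbound, isEmptyElim⟩
    · exact exists_smooth_bounded_interpolant hL x g f hcond
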